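/- Let p ∈ (0,1) and let K be a p-core CRG. If p ≤ 1/2, then K has no black edges and every white edge of K has both endpoints black. If p ≥ 1/2, then K has no white edges and every black edge of K has both endpoints white. -/

import Mathlib

/-- Colors for edges of a colored regularity graph. -/
inductive EColor : Type
  | white
  | gray
  | black
deriving DecidableEq

/-- A colored regularity graph (CRG) on a finite vertex type `V`: each vertex is
white or black (`vWhite v = true` means white), and each pair of distinct vertices
gets a symmetric edge color (white, gray or black). -/
structure CRG (V : Type) [Fintype V] where
  vWhite : V → Bool
  ecolor : V → V → EColor
  ecolor_symm : ∀ u v, ecolor u v = ecolor v u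

namespace CRG

variable {V : Type} [Fintype V] [DecidableEq V]

/-- The matrix `M_K(p)`. -/
noncomputable def M (K : CRG V) (p : ℝ) (u v : V) : ℝ :=
  if u = v then (if K.vWhite u then p else 1 - p)
  else
    match K.ecolor u v with
    | EColor.white => p
    | EColor.black => 1 - p
    | EColor.gray => 0

/-- The function `g_K(p)`: the minimum of `xᵀ M_K(p) x` over nonnegative weight
vectors summing to `1`. -/
noncomputable def g (K : CRG V) (p : ℝ) : ℝ :=
  sInf {r : ℝ | ∃ x : V → ℝ, (∀ v, 0 ≤ x v) ∧ (∑ v, x v) = 1 ∧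
    r = ∑ u, ∑ v, x u * K.M p u v * x v}

/-- The sub-CRG induced on a subset `s` of the vertices. -/
def sub (K : CRG V) (s : Finset V) : CRG {v // v ∈ s} where
  vWhite := fun v => K.vWhite v.1
  ecolor := fun u v => K.ecolor u.1 v.1
  ecolor_symm := fun u v => K.ecolor_symm u.1 v.1

/-- `K` is `p`-core if `g_K(p) < g_{K'}(p)` for every proper (nonempty) sub-CRG `K'`. -/
def IsPCore (K : CRG V) (p : ℝ) : Prop :=
  ∀ s : Finset V, s.Nonempty → s ≠ Finset.univ → K.g p < (K.sub s).g p

/-- `x` is an optimal weight vector for `K` at `p`. -/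
def IsOptWeight (K : CRG V) (p : ℝ) (x : V → ℝ) : Prop :=
  (∀ v, 0 ≤ x v) ∧ (∑ v, x v) = 1 ∧
    (∑ u, ∑ v, x u * K.M p u v * x v) = K.g p

/-- The gray degree `d_G(v)`: total weight of gray neighbors of `v`. -/
noncomputable def dG (K : CRG V) (x : V → ℝ) (v : V) : ℝ :=
  ∑ w ∈ Finset.univ.filter fun w => w ≠ v ∧ K.ecolor v w = EColor.gray, x w

/-- The white degree `d_W(v)`: total weight of white neighbors of `v`, including `v`
itself if `v` is white. -/
noncomputable def dW (K : CRG V) (x : V → ℝ) (v : V) : ℝ :=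
  (∑ w ∈ Finset.univ.filter fun w => w ≠ v ∧ K.ecolor v w = EColor.white, x w) +
    (if K.vWhite v then x v else 0)

/-- The black degree `d_B(v)`: total weight of black neighbors of `v`, including `v`
itself if `v` is black. -/
noncomputable def dB (K : CRG V) (x : V → ℝ) (v : V) : ℝ :=
  (∑ w ∈ Finset.univ.filter fun w => w ≠ v ∧ K.ecolor v w = EColor.black, x w) +
    (if K.vWhite v then 0 else x v)

/-- The number of gray neighbors of `v`. -/
def grayDeg (K : CRG V) (v : V) : ℕ :=
  (Finset.univ.filter fun w => w ≠ v ∧ K.ecolor v w = EColor.gray).card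

end CRG

/-- A graph `H` embeds in a CRG `K`, written `H ↦ K`. -/
def EmbedsIn {α : Type*} {V : Type} [Fintype V] (H : SimpleGraph α) (K : CRG V) : Prop :=
  ∃ φ : α → V,
    (∀ a b : α, H.Adj a b →
      (φ a = φ b ∧ K.vWhite (φ a) = false) ∨
      (φ a ≠ φ b ∧ (K.ecolor (φ a) (φ b) = EColor.black ∨ K.ecolor (φ a) (φ b) = EColor.gray))) ∧
    (∀ a b : α, a ≠ b → ¬H.Adj a b →
      (φ a = φ b ∧ K.vWhite (φ a) = true) ∨
      (φ a ≠ φ b ∧ (K.ecolor (φ a) (φ b) = EColor.white ∨ K.ecolor (φ a) (φ b) = EColor.gray)))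

/-!
Complementing every color turns `M_K(p)` into `M_{K̄}(1 - p)`, so it suffices to treat
`p ≤ 1/2`. Let `x` be an optimal weight vector of the `p`-core CRG `K`. Every vertex has
positive weight (otherwise the support of `x` spans a proper sub-CRG with no larger `g`), so
first-order optimality on the simplex makes `M x` the constant vector `g_K(p)`. Hence
`q(x + d) = g_K(p) + q(d)` whenever `x + d` is again a weight vector, and the core property
forces `q(d) > 0` as soon as `x + d` vanishes somewhere. But moving the weight of `v` onto `u`
along a black edge `uv` gives `q(d) = x_v² (M_uu + M_vv - 2(1 - p)) ≤ 0`, and merging the white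
neighbourhood of a white vertex `u` into `u` also gives `q(d) ≤ 0`.
-/

open Matrix Finset Filter Topology

theorem nonneg_of_forall_Ioc_mul_add_mul_sq_nonneg {a c ε : ℝ} (hε : 0 < ε)
    (h : ∀ t ∈ Set.Ioc 0 ε, 0 ≤ a * t + c * t ^ 2) : 0 ≤ a := by
  have hlim : Tendsto (fun t => a + c * t) (𝓝[>] 0) (𝓝 a) := by
    have hcont : Continuous fun t : ℝ => a + c * t := by fun_prop
    simpa using (hcont.tendsto 0).mono_left nhdsWithin_le_nhds
  refine ge_of_tendsto hlim ?_
  filter_upwards [Ioc_mem_nhdsGT hε] with t ht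
  have hpos : 0 ≤ t * (a + c * t) := by linear_combination h t ht
  exact nonneg_of_mul_nonneg_right hpos ht.1

section StdSimplex

variable {ι : Type*} [DecidableEq ι]

def mergeShift (x : ι → ℝ) (N : Finset ι) (u : ι) : ι → ℝ :=
  (∑ b ∈ N, x b) • Pi.single u 1 - fun b => if b ∈ N then x b else 0

theorem add_mergeShift_apply_of_mem {x : ι → ℝ} {N : Finset ι} {u v : ι} (hv : v ∈ N)
    (huv : u ≠ v) : x v + mergeShift x N u v = 0 := by
  simp [mergeShift, hv, huv.symm]

variable [Fintype ι]

theorem add_smul_single_sub_single_mem_stdSimplex {x : ι → ℝ} (hx : x ∈ stdSimplex ℝ ι)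
    {t : ℝ} {v : ι} (ht : t ∈ Set.Icc 0 (x v)) (u : ι) :
    x + t • (Pi.single u 1 - Pi.single v 1) ∈ stdSimplex ℝ ι := by
  refine ⟨fun w => ?_, ?_⟩
  · have : 0 ≤ (Pi.single u 1 : ι → ℝ) w := (Pi.single_nonneg.2 zero_le_one : (0 : ι → ℝ) ≤ _) w
    simp only [Pi.add_apply, Pi.smul_apply, Pi.sub_apply, smul_eq_mul]
    by_cases hwv : w = v
    · subst hwv
      rw [Pi.single_eq_same]
      nlinarith [ht.1, ht.2]
    · rw [Pi.single_eq_of_ne hwv, sub_zero]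
      nlinarith [ht.1, hx.1 w]
  · simp [Finset.sum_add_distrib, ← Finset.mul_sum, Finset.sum_sub_distrib, hx.2]

theorem add_mergeShift_mem_stdSimplex {x : ι → ℝ} (hx : x ∈ stdSimplex ℝ ι) (N : Finset ι)
    (u : ι) : x + mergeShift x N u ∈ stdSimplex ℝ ι := by
  refine ⟨fun w => ?_, ?_⟩
  · have hW : 0 ≤ ∑ b ∈ N, x b := Finset.sum_nonneg fun b _ => hx.1 b
    have : 0 ≤ (Pi.single u 1 : ι → ℝ) w := (Pi.single_nonneg.2 zero_le_one : (0 : ι → ℝ) ≤ _) w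
    simp only [mergeShift, Pi.add_apply, Pi.sub_apply, Pi.smul_apply, smul_eq_mul]
    split_ifs
    · nlinarith
    · nlinarith [hx.1 w]
  · simp [mergeShift, Finset.sum_add_distrib, Finset.sum_sub_distrib, ← Finset.mul_sum, hx.2]

end StdSimplex

namespace Matrix.IsSymm

variable {ι : Type*} [Fintype ι] {A : Matrix ι ι ℝ}

theorem add_dotProduct_mulVec_add (hA : A.IsSymm) (x d : ι → ℝ) :
    (x + d) ⬝ᵥ A *ᵥ (x + d) = x ⬝ᵥ A *ᵥ x + 2 * (A *ᵥ x ⬝ᵥ d) + d ⬝ᵥ A *ᵥ d := by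
  have hxd : x ⬝ᵥ A *ᵥ d = A *ᵥ x ⬝ᵥ d := by
    rw [dotProduct_mulVec, ← mulVec_transpose, hA.eq]
  rw [mulVec_add, dotProduct_add, add_dotProduct, add_dotProduct, hxd,
    dotProduct_comm d (A *ᵥ x)]
  ring

variable [DecidableEq ι]

theorem mulVec_le_of_isMinOn (hA : A.IsSymm) {x : ι → ℝ} (hx : x ∈ stdSimplex ℝ ι)
    (hmin : IsMinOn (fun y => y ⬝ᵥ A *ᵥ y) (stdSimplex ℝ ι) x) {v : ι} (hv : 0 < x v)
    (u : ι) : (A *ᵥ x) v ≤ (A *ᵥ x) u := by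
  set e : ι → ℝ := Pi.single u 1 - Pi.single v 1
  have hAxe : A *ᵥ x ⬝ᵥ e = (A *ᵥ x) u - (A *ᵥ x) v := by
    simp [e, dotProduct_sub]
  have hgain : ∀ t ∈ Set.Ioc 0 (x v),
      0 ≤ 2 * ((A *ᵥ x) u - (A *ᵥ x) v) * t + e ⬝ᵥ A *ᵥ e * t ^ 2 := by
    intro t ht
    have h : x ⬝ᵥ A *ᵥ x ≤ (x + t • e) ⬝ᵥ A *ᵥ (x + t • e) :=
      hmin (add_smul_single_sub_single_mem_stdSimplex hx ⟨ht.1.le, ht.2⟩ u)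
    simp only [hA.add_dotProduct_mulVec_add, mulVec_smul, dotProduct_smul, smul_dotProduct, hAxe,
      smul_eq_mul] at h
    nlinarith
  linarith [nonneg_of_forall_Ioc_mul_add_mul_sq_nonneg hv hgain]

theorem mulVec_eq_of_isMinOn (hA : A.IsSymm) {x : ι → ℝ} (hx : x ∈ stdSimplex ℝ ι)
    (hmin : IsMinOn (fun y => y ⬝ᵥ A *ᵥ y) (stdSimplex ℝ ι) x) (hpos : ∀ v, 0 < x v) :
    A *ᵥ x = fun _ => x ⬝ᵥ A *ᵥ x := by
  funext u
  have hconst : ∀ v, (A *ᵥ x) v = (A *ᵥ x) u := fun v =>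
    (hA.mulVec_le_of_isMinOn hx hmin (hpos v) u).antisymm
      (hA.mulVec_le_of_isMinOn hx hmin (hpos u) v)
  simp only [dotProduct, hconst, ← Finset.sum_mul, hx.2, one_mul]

theorem mergeShift_dotProduct_mulVec_nonpos (hA : A.IsSymm) (hA0 : ∀ i j, 0 ≤ A i j)
    {x : ι → ℝ} (hx0 : ∀ i, 0 ≤ x i) {c : ℝ} (hAx : A *ᵥ x = fun _ => c)
    {N : Finset ι} {u : ι} (huN : u ∉ N) {α : ℝ}
    (hrow : ∀ b, A u b = if b = u ∨ b ∈ N then α else 0) :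
    mergeShift x N u ⬝ᵥ A *ᵥ mergeShift x N u ≤ 0 := by
  set W := ∑ b ∈ N, x b
  set xN : ι → ℝ := fun b => if b ∈ N then x b else 0
  have hdot : ∀ w : ι → ℝ, mergeShift x N u ⬝ᵥ w = W * w u - ∑ a ∈ N, x a * w a := by
    intro w
    rw [mergeShift, sub_dotProduct, smul_dotProduct, single_one_dotProduct, smul_eq_mul]
    simp [dotProduct, ite_mul, Finset.sum_ite_mem, W]
  have hAd : ∀ a, (A *ᵥ mergeShift x N u) a = W * A a u - (A *ᵥ xN) a := fun a => by
    rw [mergeShift, mulVec_sub, mulVec_smul, mulVec_single_one]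
    rfl
  have hAxN_u : (A *ᵥ xN) u = α * W := by
    simp only [mulVec, dotProduct, xN, mul_ite, mul_zero, Finset.sum_ite_mem, Finset.univ_inter,
      W, Finset.mul_sum]
    exact Finset.sum_congr rfl fun b hb => by rw [hrow, if_pos (Or.inr hb)]
  have hc : c = α * x u + α * W := calc
    c = ∑ b, A u b * x b := (congrFun hAx u).symm
    _ = ∑ b ∈ insert u N, A u b * x b := (Finset.sum_subset (subset_univ _) fun b _ hb => by
        rw [hrow, if_neg (by simpa using hb), zero_mul]).symm
    _ = ∑ b ∈ insert u N, α * x b := Finset.sum_congr rfl fun b hb => by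
        rw [hrow, if_pos (by simpa using hb)]
    _ = α * x u + α * W := by rw [Finset.sum_insert huN, ← Finset.mul_sum]
  have hAxN_le : ∀ a ∈ N, (A *ᵥ xN) a ≤ α * W := by
    intro a ha
    have hrest_nonneg : ∀ b, 0 ≤ (x - xN) b := fun b => by
      simp only [Pi.sub_apply, xN]; split_ifs <;> simp [hx0 b]
    have hrest : A a u * (x - xN) u ≤ (A *ᵥ (x - xN)) a :=
      Finset.single_le_sum (f := fun b => A a b * (x - xN) b)
        (fun b _ => mul_nonneg (hA0 a b) (hrest_nonneg b)) (mem_univ u)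
    have hAau : A a u = α := by rw [hA.apply, hrow, if_pos (Or.inr ha)]
    have hxNu : xN u = 0 := if_neg huN
    rw [mulVec_sub, hAx, Pi.sub_apply, Pi.sub_apply, hAau, hxNu] at hrest
    linarith
  rw [hdot, hAd u, hrow u, if_pos (Or.inl rfl), hAxN_u, mul_comm W α, sub_self, mul_zero, zero_sub,
    neg_nonpos]
  refine Finset.sum_nonneg fun a ha => mul_nonneg (hx0 a) ?_
  rw [hAd, hA.apply, hrow a, if_pos (Or.inr ha)]
  linarith [hAxN_le a ha]

end Matrix.IsSymm

namespace CRG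

variable {V : Type} [Fintype V] [DecidableEq V] (K : CRG V) (p : ℝ)

noncomputable def toMatrix : Matrix V V ℝ := Matrix.of (K.M p)

@[simp]
theorem toMatrix_apply (u v : V) : K.toMatrix p u v = K.M p u v := rfl

theorem toMatrix_isSymm : (K.toMatrix p).IsSymm :=
  IsSymm.ext fun u v => by
    by_cases h : u = v
    · rw [h]
    · simp only [toMatrix_apply, M, if_neg h, if_neg (Ne.symm h), K.ecolor_symm u v]

variable {K p}

theorem M_nonneg (hp0 : 0 ≤ p) (hp1 : p ≤ 1) (u v : V) : 0 ≤ K.M p u v := by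
  unfold M
  split_ifs
  · exact hp0
  · linarith
  · split <;> linarith

theorem M_of_ecolor_eq_white {u v : V} (huv : u ≠ v) (h : K.ecolor u v = .white) :
    K.M p u v = p := by
  simp [M, huv, h]

theorem M_of_ecolor_eq_gray {u v : V} (huv : u ≠ v) (h : K.ecolor u v = .gray) :
    K.M p u v = 0 := by
  simp [M, huv, h]

theorem M_of_ecolor_eq_black {u v : V} (huv : u ≠ v) (h : K.ecolor u v = .black) :
    K.M p u v = 1 - p := by
  simp [M, huv, h]

theorem M_self_of_vWhite {u : V} (h : K.vWhite u = true) : K.M p u u = p := by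
  simp [M, h]

theorem M_self_le (hp : p ≤ 1 / 2) (u : V) : K.M p u u ≤ 1 - p := by
  simp only [M, if_true]
  split <;> linarith

variable (K p)

theorem sum_sum_mul_M_mul (x : V → ℝ) :
    ∑ u, ∑ v, x u * K.M p u v * x v = x ⬝ᵥ K.toMatrix p *ᵥ x := by
  simp only [dotProduct, mulVec, toMatrix_apply, Finset.mul_sum, mul_assoc]

theorem continuous_dotProduct_toMatrix_mulVec :
    Continuous fun x : V → ℝ => x ⬝ᵥ K.toMatrix p *ᵥ x := by
  simp only [dotProduct, mulVec]
  fun_prop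

theorem g_eq_sInf_image :
    K.g p = sInf ((fun x => x ⬝ᵥ K.toMatrix p *ᵥ x) '' stdSimplex ℝ V) := by
  simp only [g, sum_sum_mul_M_mul]
  congr 1
  ext r
  exact ⟨fun ⟨x, hx0, hx1, hr⟩ => ⟨x, ⟨hx0, hx1⟩, hr.symm⟩,
    fun ⟨x, ⟨hx0, hx1⟩, hr⟩ => ⟨x, hx0, hx1, hr.symm⟩⟩

variable {K p}

theorem g_le {x : V → ℝ} (hx : x ∈ stdSimplex ℝ V) : K.g p ≤ x ⬝ᵥ K.toMatrix p *ᵥ x := by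
  rw [g_eq_sInf_image]
  exact csInf_le ((isCompact_stdSimplex ℝ V).image
    (K.continuous_dotProduct_toMatrix_mulVec p)).bddBelow ⟨x, hx, rfl⟩

theorem isOptWeight_iff {x : V → ℝ} :
    K.IsOptWeight p x ↔ x ∈ stdSimplex ℝ V ∧ x ⬝ᵥ K.toMatrix p *ᵥ x = K.g p := by
  rw [IsOptWeight, sum_sum_mul_M_mul, ← and_assoc]
  rfl

theorem IsOptWeight.isMinOn {x : V → ℝ} (hx : K.IsOptWeight p x) :
    IsMinOn (fun y => y ⬝ᵥ K.toMatrix p *ᵥ y) (stdSimplex ℝ V) x := fun y hy => by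
  change x ⬝ᵥ K.toMatrix p *ᵥ x ≤ y ⬝ᵥ K.toMatrix p *ᵥ y
  rw [(isOptWeight_iff.1 hx).2]
  exact g_le hy

variable (K p)

theorem exists_isOptWeight [Nonempty V] : ∃ x, K.IsOptWeight p x := by
  have hne : (stdSimplex ℝ V).Nonempty := ⟨_, single_mem_stdSimplex ℝ (Classical.arbitrary V)⟩
  obtain ⟨x, hx, hgx⟩ := ((isCompact_stdSimplex ℝ V).image
    (K.continuous_dotProduct_toMatrix_mulVec p)).sInf_mem (hne.image _)
  exact ⟨x, isOptWeight_iff.2 ⟨hx, by rw [g_eq_sInf_image, ← hgx]⟩⟩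

theorem sub_M (s : Finset V) (u v : s) : (K.sub s).M p u v = K.M p u v := by
  by_cases h : u = v
  · subst h
    simp only [M, if_true]
    rfl
  · simp only [M, if_neg h, if_neg (Subtype.coe_injective.ne h)]
    rfl

variable {K p}

theorem g_sub_le {s : Finset V} {y : V → ℝ} (hy : y ∈ stdSimplex ℝ V)
    (hys : ∀ v ∉ s, y v = 0) : (K.sub s).g p ≤ y ⬝ᵥ K.toMatrix p *ᵥ y := by
  have hsum : ∀ f : V → ℝ, (∀ v ∉ s, f v = 0) → ∑ v : s, f v = ∑ v, f v := fun f hf => by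
    rw [Finset.sum_coe_sort s f]
    exact Finset.sum_subset (subset_univ s) fun v _ hv => hf v hv
  have hz : (fun v : s => y v) ∈ stdSimplex ℝ s :=
    ⟨fun v => hy.1 v, by rw [hsum y hys, hy.2]⟩
  refine (g_le hz).trans_eq ?_
  rw [← sum_sum_mul_M_mul, ← sum_sum_mul_M_mul]
  simp only [sub_M]
  rw [hsum (fun u => ∑ v : s, y u * K.M p u v * y v) fun u hu => by simp [hys u hu]]
  exact Finset.sum_congr rfl fun u _ =>
    hsum (fun v => y u * K.M p u v * y v) fun v hv => by simp [hys v hv]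

theorem IsPCore.g_lt (hcore : K.IsPCore p) {y : V → ℝ} (hy : y ∈ stdSimplex ℝ V) {v : V}
    (hv : y v = 0) : K.g p < y ⬝ᵥ K.toMatrix p *ᵥ y := by
  set s := univ.filter fun w => y w ≠ 0
  have hs : s.Nonempty := by
    by_contra h
    have hy0 : ∀ w, y w = 0 := by simpa [s, Finset.not_nonempty_iff_eq_empty] using h
    simpa [hy0] using hy.2
  have hs' : s ≠ univ := fun h => by
    have hvs : v ∈ s := h ▸ mem_univ v
    simp [s, hv] at hvs
  exact (hcore s hs hs').trans_le (g_sub_le hy fun w hw => by simpa [s] using hw)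

theorem IsPCore.pos_of_isOptWeight (hcore : K.IsPCore p) {x : V → ℝ} (hx : K.IsOptWeight p x)
    (v : V) : 0 < x v := by
  rw [isOptWeight_iff] at hx
  refine (hx.1.1 v).lt_of_ne fun h => ?_
  simpa [hx.2] using hcore.g_lt hx.1 h.symm

theorem IsPCore.mulVec_eq_g (hcore : K.IsPCore p) {x : V → ℝ} (hx : K.IsOptWeight p x) :
    K.toMatrix p *ᵥ x = fun _ => K.g p := by
  rw [(K.toMatrix_isSymm p).mulVec_eq_of_isMinOn (isOptWeight_iff.1 hx).1 hx.isMinOn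
    (hcore.pos_of_isOptWeight hx), (isOptWeight_iff.1 hx).2]

theorem IsPCore.dotProduct_mulVec_pos (hcore : K.IsPCore p) {x d : V → ℝ}
    (hx : K.IsOptWeight p x) (hd : x + d ∈ stdSimplex ℝ V) {v : V} (hv : x v + d v = 0) :
    0 < d ⬝ᵥ K.toMatrix p *ᵥ d := by
  obtain ⟨hxS, hxg⟩ := isOptWeight_iff.1 hx
  have hsum : ∑ w, d w = 0 := by
    have := hd.2
    rw [Pi.add_def, Finset.sum_add_distrib, hxS.2] at this
    linarith
  have hlin : (fun _ => K.g p) ⬝ᵥ d = 0 := by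
    simp [dotProduct, ← Finset.mul_sum, hsum]
  have h := hcore.g_lt hd hv
  rw [(K.toMatrix_isSymm p).add_dotProduct_mulVec_add, hxg, hcore.mulVec_eq_g hx, hlin] at h
  linarith

end CRG

def EColor.compl : EColor → EColor
  | .white => .black
  | .gray => .gray
  | .black => .white

namespace CRG

variable {V : Type} [Fintype V]

@[simps]
def compl (K : CRG V) : CRG V where
  vWhite v := !K.vWhite v
  ecolor u v := (K.ecolor u v).compl
  ecolor_symm u v := by rw [K.ecolor_symm]

variable [DecidableEq V] {K : CRG V} {p : ℝ}

theorem M_compl : K.compl.M (1 - p) = K.M p := by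
  funext u v
  by_cases h : u = v
  · subst h
    cases hu : K.vWhite u <;> simp [M, hu]
  · cases hc : K.ecolor u v <;> simp [M, h, hc, EColor.compl]

theorem g_compl : K.compl.g (1 - p) = K.g p := by
  simp only [g_eq_sInf_image, toMatrix, M_compl]

theorem IsPCore.compl (hcore : K.IsPCore p) : K.compl.IsPCore (1 - p) := fun s hs hs' => by
  rw [g_compl]
  exact (g_compl (K := K.sub s)).symm ▸ hcore s hs hs'

theorem IsPCore.ecolor_ne_black (hcore : K.IsPCore p) (hp : p ≤ 1 / 2) {u v : V}
    (huv : u ≠ v) : K.ecolor u v ≠ .black := by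
  intro hb
  have : Nonempty V := ⟨u⟩
  obtain ⟨x, hx⟩ := K.exists_isOptWeight p
  obtain ⟨hxS, -⟩ := isOptWeight_iff.1 hx
  set e : V → ℝ := Pi.single u 1 - Pi.single v 1
  have hpos := hcore.dotProduct_mulVec_pos hx
    (add_smul_single_sub_single_mem_stdSimplex hxS ⟨hxS.1 v, le_rfl⟩ u) (v := v)
    (by simp [huv.symm])
  have hee : e ⬝ᵥ K.toMatrix p *ᵥ e = K.M p u u + K.M p v v - 2 * (1 - p) := by
    simp [e, sub_dotProduct, dotProduct_sub, mulVec_sub, M_of_ecolor_eq_black huv hb,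
      M_of_ecolor_eq_black huv.symm ((K.ecolor_symm v u).trans hb)]
    ring
  rw [mulVec_smul, dotProduct_smul, smul_dotProduct, hee, smul_eq_mul, smul_eq_mul] at hpos
  nlinarith [K.M_self_le hp u, K.M_self_le hp v, mul_self_nonneg (x v)]

theorem IsPCore.vWhite_eq_false_of_ecolor_eq_white (hcore : K.IsPCore p) (hp0 : 0 ≤ p)
    (hp : p ≤ 1 / 2) {u v : V} (huv : u ≠ v) (h : K.ecolor u v = .white) :
    K.vWhite u = false := by
  by_contra hu
  rw [Bool.not_eq_false] at hu
  have : Nonempty V := ⟨u⟩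
  obtain ⟨x, hx⟩ := K.exists_isOptWeight p
  obtain ⟨hxS, -⟩ := isOptWeight_iff.1 hx
  set N := univ.filter fun w => w ≠ u ∧ K.ecolor u w = .white
  have hrow : ∀ b, K.toMatrix p u b = if b = u ∨ b ∈ N then p else 0 := by
    intro b
    rw [toMatrix_apply]
    by_cases hbu : b = u
    · simp [hbu, M_self_of_vWhite hu]
    · have hub := Ne.symm hbu
      cases hc : K.ecolor u b with
      | white => simp [N, hbu, hc, M_of_ecolor_eq_white hub hc]
      | gray => simp [N, hbu, hc, M_of_ecolor_eq_gray hub hc]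
      | black => exact absurd hc (hcore.ecolor_ne_black hp hub)
  have hle := (K.toMatrix_isSymm p).mergeShift_dotProduct_mulVec_nonpos
    (M_nonneg hp0 (by linarith)) hxS.1 (hcore.mulVec_eq_g hx) (by simp [N]) hrow
  have hpos := hcore.dotProduct_mulVec_pos hx (add_mergeShift_mem_stdSimplex hxS N u)
    (add_mergeShift_apply_of_mem (by simp [N, huv.symm, h]) huv)
  exact hle.not_gt hpos

theorem IsPCore.structure_of_le_half (hcore : K.IsPCore p) (hp0 : 0 ≤ p) (hp : p ≤ 1 / 2) :
    (∀ u v : V, u ≠ v → K.ecolor u v ≠ EColor.black) ∧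
      (∀ u v : V, u ≠ v → K.ecolor u v = EColor.white →
        K.vWhite u = false ∧ K.vWhite v = false) :=
  ⟨fun _ _ => hcore.ecolor_ne_black hp, fun _ _ huv h =>
    ⟨hcore.vWhite_eq_false_of_ecolor_eq_white hp0 hp huv h,
      hcore.vWhite_eq_false_of_ecolor_eq_white hp0 hp huv.symm ((K.ecolor_symm _ _).trans h)⟩⟩

end CRG

theorem pcore_structure_general {V : Type} [Fintype V] [DecidableEq V]
    (p : ℝ) (hp : p ∈ Set.Ioo (0 : ℝ) 1) (K : CRG V) (hcore : K.IsPCore p) :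
    (p ≤ 1 / 2 →
      (∀ u v : V, u ≠ v → K.ecolor u v ≠ EColor.black) ∧
      (∀ u v : V, u ≠ v → K.ecolor u v = EColor.white →
        K.vWhite u = false ∧ K.vWhite v = false)) ∧
    (1 / 2 ≤ p →
      (∀ u v : V, u ≠ v → K.ecolor u v ≠ EColor.white) ∧
      (∀ u v : V, u ≠ v → K.ecolor u v = EColor.black →
        K.vWhite u = true ∧ K.vWhite v = true)) := by
  refine ⟨hcore.structure_of_le_half hp.1.le, fun hp2 => ?_⟩
  obtain ⟨hblack, hwhite⟩ :=
    hcore.compl.structure_of_le_half (by linarith [hp.2]) (by linarith)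
  refine ⟨fun u v huv hw => hblack u v huv (by simp [hw, EColor.compl]), fun u v huv hb => ?_⟩
  simpa using hwhite u v huv (by simp [hb, EColor.compl])

theorem pcore_structure {V : Type} [Fintype V] [DecidableEq V] [Nonempty V]
    (p : ℝ) (hp : p ∈ Set.Ioo (0 : ℝ) 1) (K : CRG V) (hcore : K.IsPCore p) :
    (p ≤ 1 / 2 →
      (∀ u v : V, u ≠ v → K.ecolor u v ≠ EColor.black) ∧
      (∀ u v : V, u ≠ v → K.ecolor u v = EColor.white →
        K.vWhite u = false ∧ K.vWhite v = false)) ∧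
    (1 / 2 ≤ p →
      (∀ u v : V, u ≠ v → K.ecolor u v ≠ EColor.white) ∧
      (∀ u v : V, u ≠ v → K.ecolor u v = EColor.black →
        K.vWhite u = true ∧ K.vWhite v = true)) :=
  pcore_structure_general p hp K hcore
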